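/- In any Hamiltonian enumeration Q₁,…,Q_{k²} of the k×k grid (k > 2) in which consecutive squares are edge-adjacent, if additionally every pair Q_i, Q_{i+2} is diagonally adjacent, then for each corner cell Q_i of the grid with 2 < i < k²-1, the four cells Q_{i-2}, Q_{i-1}, Q_{i+1}, Q_{i+2} are all distinct cells intersecting Q_i, contradicting that a corner cell has only three neighbors intersecting it. -/
import Mathlib


open Set

/-- Two cells of the `k × k` grid intersect (as closed unit squares) iff their index
pairs differ by at most `1` in each coordinate. -/
def cellsIntersect {k : ℕ} (u v : Fin k × Fin k) : Prop :=
  ((u.1.val : ℤ) - (v.1.val : ℤ)).natAbs ≤ 1 ∧ ((u.2.val : ℤ) - (v.2.val : ℤ)).natAbs ≤ 1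

/-- A corner cell of the `k × k` grid. -/
def isCornerCell {k : ℕ} (u : Fin k × Fin k) : Prop :=
  (u.1.val = 0 ∨ u.1.val = k - 1) ∧ (u.2.val = 0 ∨ u.2.val = k - 1)

/-- In a Hamiltonian enumeration of the `k × k` grid (`k > 2`) in which consecutive
cells are edge-adjacent and cells two apart are diagonally adjacent, for any corner
cell occurring at an interior position `i` (with `Q_{i-2}, …, Q_{i+2}` all defined),
the four cells `Q_{i-2}, Q_{i-1}, Q_{i+1}, Q_{i+2}` are pairwise distinct, distinct
from `Q_i`, and all intersect `Q_i`. -/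
theorem corner_cell_four_neighbors (k : ℕ) (hk : 2 < k)
    (e : Fin (k ^ 2) ≃ (Fin k × Fin k))
    (hside : ∀ i : ℕ, ∀ h : i + 1 < k ^ 2,
      (((e ⟨i, by omega⟩).1.val : ℤ) - ((e ⟨i + 1, h⟩).1.val : ℤ)).natAbs +
      (((e ⟨i, by omega⟩).2.val : ℤ) - ((e ⟨i + 1, h⟩).2.val : ℤ)).natAbs = 1)
    (hdiag : ∀ i : ℕ, ∀ h : i + 2 < k ^ 2,
      (((e ⟨i, by omega⟩).1.val : ℤ) - ((e ⟨i + 2, h⟩).1.val : ℤ)).natAbs = 1 ∧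
      (((e ⟨i, by omega⟩).2.val : ℤ) - ((e ⟨i + 2, h⟩).2.val : ℤ)).natAbs = 1)
    (i : ℕ) (hi2 : 2 ≤ i) (hi : i + 2 < k ^ 2)
    (hcorner : isCornerCell (e ⟨i, by omega⟩)) :
    [e ⟨i - 2, by omega⟩, e ⟨i - 1, by omega⟩, e ⟨i + 1, by omega⟩,
        e ⟨i + 2, hi⟩].Pairwise (· ≠ ·) ∧
    (∀ u ∈ [e ⟨i - 2, by omega⟩, e ⟨i - 1, by omega⟩, e ⟨i + 1, by omega⟩,
        e ⟨i + 2, hi⟩], u ≠ e ⟨i, by omega⟩ ∧ cellsIntersect u (e ⟨i, by omega⟩)) := by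
  have hne : ∀ (a b : ℕ) (ha : a < k ^ 2) (hb : b < k ^ 2), a ≠ b →
      e ⟨a, ha⟩ ≠ e ⟨b, hb⟩ := by
    intro a b ha hb hab h
    exact hab (by simpa [Fin.mk.injEq] using e.injective h)
  obtain ⟨j, rfl⟩ : ∃ j, i = j + 2 := ⟨i - 2, by omega⟩
  simp only [Nat.add_sub_cancel, show j + 2 - 1 = j + 1 from rfl]
  have h1 := hside j (by omega)
  have h2 := hside (j + 1) (by omega)
  have h3 := hside (j + 2) (by omega)
  have h4 := hdiag j (by omega)
  have h5 := hdiag (j + 2) (by omega)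
  simp only [show j + 1 + 1 = j + 2 from rfl] at h2
  simp only [show j + 2 + 1 = j + 3 from rfl] at h3
  simp only [show j + 2 + 2 = j + 4 from rfl] at h5
  simp only [show j + 2 + 1 = j + 3 from rfl, show j + 2 + 2 = j + 4 from rfl]
  refine ⟨?_, ?_⟩
  · refine List.pairwise_cons.mpr ⟨?_, List.pairwise_cons.mpr ⟨?_,
      List.pairwise_cons.mpr ⟨?_, List.pairwise_cons.mpr ⟨?_, List.Pairwise.nil⟩⟩⟩⟩ <;>
      intro u hu <;> fin_cases hu <;> exact hne _ _ _ _ (by omega)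
  · intro u hu
    simp only [List.mem_cons, List.not_mem_nil, or_false] at hu
    unfold cellsIntersect
    obtain rfl | rfl | rfl | rfl := hu
    · exact ⟨hne _ _ _ _ (by omega), ⟨by omega, by omega⟩⟩
    · exact ⟨hne _ _ _ _ (by omega), ⟨by omega, by omega⟩⟩
    · exact ⟨hne _ _ _ _ (by omega), ⟨by omega, by omega⟩⟩
    · exact ⟨hne _ _ _ _ (by omega), ⟨by omega, by omega⟩⟩
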